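/- Let 0 < μ < 2/5 and let n ≥ 1 be an odd integer. Then G_n > 0 if n ≡ 1 (mod 4), and G_n < 0 if n ≡ 3 (mod 4). -/

import Mathlib

/-!
Write `h t = (1 + (μt)²)^(-3/2)`, the derivative of `t / √(1 + (μt)²)`. For odd `n = 2m + 1`,
`cos (n π/2) = 0` and `sin (n π/2) = (-1)^m`, so integrating by parts twice gives
`n² G_n = (-1)^m h(π/2) - ∫₀^{π/2} h' sin(nt)`. Since `h` decreases, the remainder is bounded
by `h 0 - h(π/2) = 1 - h(π/2)`, and `μ < 2/5` forces `h(π/2) > 1/2`: the boundary term wins.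
-/

open Real MeasureTheory

/-- The hyper-geometric integral `G_n = ∫₀^{π/2} t sin(nt)/√(1+(μt)²) dt`. -/
noncomputable def G (μ : ℝ) (n : ℕ) : ℝ :=
  ∫ t in (0:ℝ)..(π / 2), t * Real.sin ((n : ℝ) * t) / Real.sqrt (1 + (μ * t) ^ 2)

open Set

section IntegrationByParts

variable {u u' : ℝ → ℝ} {a b ω : ℝ}

theorem integral_mul_sin_mul_eq (hω : ω ≠ 0) (hu : ∀ x ∈ uIcc a b, HasDerivAt u (u' x) x)
    (hu' : IntervalIntegrable u' volume a b) :
    ∫ x in a..b, u x * sin (ω * x) =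
      (u a * cos (ω * a) - u b * cos (ω * b) + ∫ x in a..b, u' x * cos (ω * x)) / ω := by
  have hv : ∀ x ∈ uIcc a b, HasDerivAt (fun x => -cos (ω * x) / ω) (sin (ω * x)) x := by
    intro x _
    refine (((hasDerivAt_id' x).const_mul ω).cos.neg.div_const ω).congr_deriv ?_
    field_simp
  rw [intervalIntegral.integral_mul_deriv_eq_deriv_mul hu hv hu'
    ((by fun_prop : Continuous _).intervalIntegrable _ _)]
  simp only [mul_div_assoc', intervalIntegral.integral_div, mul_neg, intervalIntegral.integral_neg]
  field_simp
  ring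

theorem integral_mul_cos_mul_eq (hω : ω ≠ 0) (hu : ∀ x ∈ uIcc a b, HasDerivAt u (u' x) x)
    (hu' : IntervalIntegrable u' volume a b) :
    ∫ x in a..b, u x * cos (ω * x) =
      (u b * sin (ω * b) - u a * sin (ω * a) - ∫ x in a..b, u' x * sin (ω * x)) / ω := by
  have hv : ∀ x ∈ uIcc a b, HasDerivAt (fun x => sin (ω * x) / ω) (cos (ω * x)) x := by
    intro x _
    refine (((hasDerivAt_id' x).const_mul ω).sin.div_const ω).congr_deriv ?_
    field_simp
  rw [intervalIntegral.integral_mul_deriv_eq_deriv_mul hu hv hu'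
    ((by fun_prop : Continuous _).intervalIntegrable _ _)]
  simp only [mul_div_assoc', intervalIntegral.integral_div]
  field_simp

theorem abs_integral_mul_sin_mul_le_sub (hab : a ≤ b)
    (hu : ∀ x ∈ uIcc a b, HasDerivAt u (u' x) x) (hu' : IntervalIntegrable u' volume a b)
    (hu'_nonpos : ∀ x ∈ Icc a b, u' x ≤ 0) :
    |∫ x in a..b, u' x * sin (ω * x)| ≤ u a - u b := by
  have hint : IntervalIntegrable (fun x => u' x * sin (ω * x)) volume a b :=
    hu'.mul_continuousOn (by fun_prop)
  calc |∫ x in a..b, u' x * sin (ω * x)|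
      ≤ ∫ x in a..b, |u' x * sin (ω * x)| := intervalIntegral.abs_integral_le_integral_abs hab
    _ ≤ ∫ x in a..b, -u' x := by
        refine intervalIntegral.integral_mono_on hab hint.abs hu'.neg fun x hx => ?_
        rw [abs_mul, abs_of_nonpos (hu'_nonpos x hx)]
        exact mul_le_of_le_one_right (neg_nonneg.2 (hu'_nonpos x hx)) (abs_sin_le_one _)
    _ = u a - u b := by
        rw [intervalIntegral.integral_neg, intervalIntegral.integral_eq_sub_of_hasDerivAt hu hu',
          neg_sub]

end IntegrationByParts

theorem integral_mul_sin_mul_eq_of_cos_eq_zero {f h h' : ℝ → ℝ} {a ω : ℝ} (hω : ω ≠ 0)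
    (hf : ∀ x ∈ uIcc 0 a, HasDerivAt f (h x) x) (hh : ∀ x ∈ uIcc 0 a, HasDerivAt h (h' x) x)
    (hh' : IntervalIntegrable h' volume 0 a) (hf0 : f 0 = 0) (hcos : cos (ω * a) = 0) :
    ∫ x in 0..a, f x * sin (ω * x) =
      (h a * sin (ω * a) - ∫ x in 0..a, h' x * sin (ω * x)) / ω ^ 2 := by
  have hh_int : IntervalIntegrable h volume 0 a :=
    ContinuousOn.intervalIntegrable fun x hx => (hh x hx).continuousAt.continuousWithinAt
  rw [integral_mul_sin_mul_eq hω hf hh_int, integral_mul_cos_mul_eq hω hh hh', hf0, hcos]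
  simp only [mul_zero, sin_zero]
  field_simp
  ring

section Weight

variable (μ : ℝ)

theorem hasDerivAt_sqrt_one_add_mul_sq (t : ℝ) :
    HasDerivAt (fun t => √(1 + (μ * t) ^ 2)) (μ ^ 2 * t / √(1 + (μ * t) ^ 2)) t := by
  have hsq : HasDerivAt (fun t => 1 + (μ * t) ^ 2) (2 * (μ ^ 2 * t)) t := by
    refine (((hasDerivAt_id' t).const_mul μ).pow 2).const_add 1 |>.congr_deriv ?_
    ring
  refine (hsq.sqrt (by positivity)).congr_deriv ?_
  field_simp

theorem hasDerivAt_div_sqrt_one_add_mul_sq (t : ℝ) :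
    HasDerivAt (fun t => t / √(1 + (μ * t) ^ 2)) (√(1 + (μ * t) ^ 2) ^ 3)⁻¹ t := by
  have hS : 0 < √(1 + (μ * t) ^ 2) := by positivity
  refine ((hasDerivAt_id' t).div (hasDerivAt_sqrt_one_add_mul_sq μ t) hS.ne').congr_deriv ?_
  field_simp
  rw [sq_sqrt (by positivity)]
  ring

theorem hasDerivAt_inv_sqrt_one_add_mul_sq_pow_three (t : ℝ) :
    HasDerivAt (fun t => (√(1 + (μ * t) ^ 2) ^ 3)⁻¹)
      (-(3 * μ ^ 2 * t) / √(1 + (μ * t) ^ 2) ^ 5) t := by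
  have hS : 0 < √(1 + (μ * t) ^ 2) := by positivity
  refine (((hasDerivAt_sqrt_one_add_mul_sq μ t).pow 3).inv (pow_ne_zero 3 hS.ne')).congr_deriv ?_
  simp only [Pi.pow_apply]
  field_simp
  ring

theorem half_lt_inv_sqrt_one_add_mul_sq_pow_three (hμ0 : 0 < μ) (hμ : μ < 2 / 5) :
    1 / 2 < (√(1 + (μ * (π / 2)) ^ 2) ^ 3)⁻¹ := by
  have hx : (μ * (π / 2)) ^ 2 < 2 / 5 := by
    have : μ * (π / 2) < 0.63 := by nlinarith [pi_lt_d2]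
    nlinarith [mul_pos hμ0 pi_pos]
  have hcube : (√(1 + (μ * (π / 2)) ^ 2) ^ 3) ^ 2 < 2 ^ 2 := by
    rw [← pow_mul, show 3 * 2 = 2 * 3 from rfl, pow_mul, sq_sqrt (by positivity)]
    calc (1 + (μ * (π / 2)) ^ 2) ^ 3 ≤ (7 / 5) ^ 3 := by gcongr; linarith
      _ < 2 ^ 2 := by norm_num
  rw [one_div, inv_lt_inv₀ (by norm_num) (by positivity)]
  exact (pow_lt_pow_iff_left₀ (by positivity) (by norm_num) two_ne_zero).1 hcube

end Weight

theorem neg_one_pow_mul_G_pos {μ : ℝ} (hμ0 : 0 < μ) (hμ : μ < 2 / 5) (m : ℕ) :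
    0 < (-1) ^ m * G μ (2 * m + 1) := by
  set ω : ℝ := ((2 * m + 1 : ℕ) : ℝ)
  set h : ℝ → ℝ := fun t => (√(1 + (μ * t) ^ 2) ^ 3)⁻¹
  set h' : ℝ → ℝ := fun t => -(3 * μ ^ 2 * t) / √(1 + (μ * t) ^ 2) ^ 5
  set I := ∫ t in 0..π / 2, h' t * sin (ω * t)
  have hωa : ω * (π / 2) = m * π + π / 2 := by simp only [ω]; push_cast; ring
  have hcos : cos (ω * (π / 2)) = 0 := by
    rw [hωa, cos_add_pi_div_two, sin_nat_mul_pi, neg_zero]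
  have hsin : sin (ω * (π / 2)) = (-1) ^ m := by
    rw [hωa, sin_add_pi_div_two, cos_nat_mul_pi]
  have hh' : IntervalIntegrable h' volume 0 (π / 2) :=
    (Continuous.div (by fun_prop) (by fun_prop) fun t => by positivity).intervalIntegrable _ _
  have hG : G μ (2 * m + 1) = (h (π / 2) * (-1) ^ m - I) / ω ^ 2 := by
    rw [← hsin, ← integral_mul_sin_mul_eq_of_cos_eq_zero (by positivity)
      (fun t _ => hasDerivAt_div_sqrt_one_add_mul_sq μ t)
      (fun t _ => hasDerivAt_inv_sqrt_one_add_mul_sq_pow_three μ t) hh' (by simp) hcos]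
    unfold G
    congr! 2 with t
    ring
  have hI : |I| ≤ 1 - h (π / 2) := by
    simpa [h] using abs_integral_mul_sin_mul_le_sub (by positivity)
      (fun t _ => hasDerivAt_inv_sqrt_one_add_mul_sq_pow_three μ t) hh'
      fun t ht => div_nonpos_of_nonpos_of_nonneg (by nlinarith [ht.1]) (by positivity)
  have hhalf : 1 / 2 < h (π / 2) := half_lt_inv_sqrt_one_add_mul_sq_pow_three μ hμ0 hμ
  have hsign : (-1) ^ m * I ≤ |I| := by
    simpa [abs_mul] using le_abs_self ((-1) ^ m * I)
  rw [hG, mul_div_assoc']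
  refine div_pos ?_ (by positivity)
  have hsq : ((-1 : ℝ) ^ m) ^ 2 = 1 := by
    rw [← pow_mul]; exact (even_two.mul_left m).neg_one_pow
  nlinarith

theorem G_sign_general (μ : ℝ) (hμ0 : 0 < μ) (hμ : μ < 2 / 5) (n : ℕ) (hno : Odd n) :
    (n % 4 = 1 → 0 < G μ n) ∧ (n % 4 = 3 → G μ n < 0) := by
  obtain ⟨m, rfl⟩ := hno
  have hpos := neg_one_pow_mul_G_pos hμ0 hμ m
  refine ⟨fun h4 => ?_, fun h4 => ?_⟩
  · have hm : Even m := Nat.even_iff.2 (by omega)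
    simpa [hm.neg_one_pow] using hpos
  · have hm : Odd m := Nat.odd_iff.2 (by omega)
    simpa [hm.neg_one_pow] using hpos

/-- For `0 < μ < 2/5` and odd `n ≥ 1`, `G_n > 0` if `n ≡ 1 (mod 4)` and
`G_n < 0` if `n ≡ 3 (mod 4)`. -/
theorem G_sign (μ : ℝ) (hμ0 : 0 < μ) (hμ : μ < 2 / 5) (n : ℕ) (hn : 1 ≤ n) (hno : Odd n) :
    (n % 4 = 1 → 0 < G μ n) ∧ (n % 4 = 3 → G μ n < 0) :=
  G_sign_general μ hμ0 hμ n hno
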